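/- Let x be a sequence of length m with distinct elements, i ∈ {1,...,m-1}, and y = τ(x,i). For all j ∈ {1,...,m} \ {i, i+1}: if PD_x[j] ∉ {j-i-1, j-i} then PD_y[j] = PD_x[j], and if RPD_x[j] ∉ {i-j, i+1-j} then RPD_y[j] = RPD_x[j]. -/

import Mathlib

/-- Binary tree shapes (Cartesian trees are determined by their shape). -/
inductive BTree : Type
  | nil : BTree
  | node : BTree → BTree → BTree
deriving DecidableEq

namespace BTree

/-- Number of nodes. -/
def size : BTree → ℕ
  | nil => 0
  | node l r => size l + size r + 1

/-- Length of the leftmost path. -/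
def LMP : BTree → ℕ
  | nil => 0
  | node l _ => LMP l + 1

/-- Length of the rightmost path. -/
def RMP : BTree → ℕ
  | nil => 0
  | node _ r => RMP r + 1

end BTree

/-- Minimum value of a list (0 for the empty list). -/
def listMin : List ℤ → ℤ
  | [] => 0
  | a :: t => t.foldl min a

/-- Index (0-based) of the minimum of a list. -/
def minIdx (l : List ℤ) : ℕ := l.idxOf (listMin l)

/-- Cartesian tree of a list, with fuel for termination. -/
def ctreeAux : ℕ → List ℤ → BTree
  | 0, _ => .nil
  | _ + 1, [] => .nil
  | n + 1, a :: t =>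
      let g := minIdx (a :: t)
      .node (ctreeAux n ((a :: t).take g)) (ctreeAux n ((a :: t).drop (g + 1)))

/-- Cartesian tree of a list: the root is the position of the minimum,
its subtrees are the Cartesian trees of the prefix and suffix around it. -/
def ctreeL (l : List ℤ) : BTree := ctreeAux l.length l

/-- The factor x[a..b] (1-based positions) of a sequence, as a list. -/
def seqList (x : ℕ → ℤ) (a b : ℕ) : List ℤ :=
  (List.range (b + 1 - a)).map (fun k => x (a + k))

/-- Cartesian tree of the sequence x[1..m]. -/
def ctreeOf (m : ℕ) (x : ℕ → ℤ) : BTree := ctreeL (seqList x 1 m)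

/-- Positions j < h (1-based) with x[j] < x[h]. -/
def PDset (x : ℕ → ℤ) (h : ℕ) : Finset ℕ :=
  (Finset.Ico 1 h).filter (fun j => x j < x h)

/-- Parent-distance table: PD_x[h] = h - max{j < h : x[j] < x[h]}, 0 if no such j. -/
def PD (x : ℕ → ℤ) (h : ℕ) : ℕ :=
  if hs : (PDset x h).Nonempty then h - (PDset x h).max' hs else 0

/-- Positions h < j ≤ m with x[j] < x[h]. -/
def RPDset (m : ℕ) (x : ℕ → ℤ) (h : ℕ) : Finset ℕ :=
  (Finset.Ioc h m).filter (fun j => x j < x h)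

/-- Reverse parent-distance table: RPD_x[h] = min{j > h : x[j] < x[h]} - h, 0 if no such j. -/
def RPD (m : ℕ) (x : ℕ → ℤ) (h : ℕ) : ℕ :=
  if hs : (RPDset m x h).Nonempty then (RPDset m x h).min' hs - h else 0

/-- Referent of h: the smallest position j > h with x[j] < x[h], or -1 if none. -/
def refD (m : ℕ) (x : ℕ → ℤ) (h : ℕ) : ℤ :=
  if hs : (RPDset m x h).Nonempty then ((RPDset m x h).min' hs : ℤ) else -1

/-- Skipped-number table: SN_x[h] is the number of nodes on the rightmost path of the
left subtree of node h in C(x), i.e. the number of positions whose referent is h. -/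
def SN (m : ℕ) (x : ℕ → ℤ) (h : ℕ) : ℕ :=
  ((Finset.Ico 1 h).filter (fun j => refD m x j = (h : ℤ))).card

/-- The swap τ(x,i): exchange the entries at positions i and i+1. -/
def swapAt (x : ℕ → ℤ) (i : ℕ) : ℕ → ℤ :=
  fun j => if j = i then x (i + 1) else if j = i + 1 then x i else x j

/-- ng(T,i): the Cartesian trees obtained from a sequence realizing T by one swap
at position i (valid positions are 1 ≤ i ≤ m-1). -/
def ngi (m : ℕ) (T : BTree) (i : ℕ) : Set BTree :=
  { S | 1 ≤ i ∧ i + 1 ≤ m ∧ ∃ x : ℕ → ℤ, Set.InjOn x (Set.Icc 1 m) ∧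
        ctreeOf m x = T ∧ S = ctreeOf m (swapAt x i) }

/-- ng(T): the swap neighbourhood of T. -/
def ng (m : ℕ) (T : BTree) : Set BTree := ⋃ i, ngi m T i

/-- Number of permutations of {1,...,n} whose Cartesian tree is A. -/
noncomputable def permCount (n : ℕ) (A : BTree) : ℕ :=
  Set.ncard { σ : Equiv.Perm (Fin n) |
    ctreeL (List.ofFn (fun k : Fin n => ((σ k : ℕ) : ℤ) + 1)) = A }

/-- Product over all nodes t of A of the size of the subtree rooted at t. -/
def hookProd : BTree → ℕ
  | .nil => 1
  | .node l r => (BTree.node l r).size * hookProd l * hookProd r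


/-! Since `τ(x,i) = x ∘ (i i+1)` and the transposition fixes `j` and maps the windows `[1, j)` and
`(j, m]` to themselves, it permutes the candidate sets defining `PD[j]` and `RPD[j]`. An adjacent
transposition preserves the order relative to every position outside `{i, i+1}`, so the nearest
candidate is unchanged unless it is `i` or `i+1`, i.e. unless `PD[j]` or `RPD[j]` takes one of the
excluded values. -/

open Equiv Finset

lemma swapAt_eq_comp_swap (x : ℕ → ℤ) (i : ℕ) : swapAt x i = x ∘ swap i (i + 1) := by
  funext k
  rcases eq_or_ne k i with rfl | hki
  · simp [swapAt]
  rcases eq_or_ne k (i + 1) with rfl | hki1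
  · simp [swapAt]
  · simp [swapAt, hki, hki1, swap_apply_of_ne_of_ne hki hki1]

section AdjacentSwap

variable {a b : ℕ}

lemma swap_succ_lt_iff (hb : b ≠ a + 1) (k : ℕ) : swap a (a + 1) k < b ↔ k < b := by
  rcases eq_or_ne k a with rfl | hka
  · simp only [swap_apply_left]; omega
  rcases eq_or_ne k (a + 1) with rfl | hka1
  · simp only [swap_apply_right]; omega
  · rw [swap_apply_of_ne_of_ne hka hka1]

lemma lt_swap_succ_iff (hb : b ≠ a) (k : ℕ) : b < swap a (a + 1) k ↔ b < k := by
  simpa only [Nat.lt_succ_iff, not_le] using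
    (swap_succ_lt_iff (a := a) (b := b + 1) (by omega) k).not

lemma max'_map_swap_succ {s : Finset ℕ} (hs : s.Nonempty) (ha : s.max' hs ≠ a)
    (ha1 : s.max' hs ≠ a + 1) :
    (s.map (swap a (a + 1)).toEmbedding).max' hs.map = s.max' hs := by
  have hfix : swap a (a + 1) (s.max' hs) = s.max' hs := swap_apply_of_ne_of_ne ha ha1
  refine le_antisymm (max'_le _ _ _ ?_) (le_max' _ _ ?_)
  · simp only [mem_map_equiv, symm_swap]
    intro k hk
    simpa only [not_lt] using ((lt_swap_succ_iff ha k).not).1 (not_lt.2 (le_max' s _ hk))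
  · rw [mem_map_equiv, symm_swap, hfix]
    exact max'_mem s hs

lemma min'_map_swap_succ {s : Finset ℕ} (hs : s.Nonempty) (ha : s.min' hs ≠ a)
    (ha1 : s.min' hs ≠ a + 1) :
    (s.map (swap a (a + 1)).toEmbedding).min' hs.map = s.min' hs := by
  have hfix : swap a (a + 1) (s.min' hs) = s.min' hs := swap_apply_of_ne_of_ne ha ha1
  refine le_antisymm (min'_le _ _ ?_) (le_min' _ _ _ ?_)
  · rw [mem_map_equiv, symm_swap, hfix]
    exact min'_mem s hs
  · simp only [mem_map_equiv, symm_swap]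
    intro k hk
    simpa only [not_lt] using ((swap_succ_lt_iff ha1 k).not).1 (not_lt.2 (min'_le s _ hk))

end AdjacentSwap

section DistanceTables

variable (m : ℕ) (x : ℕ → ℤ) {i j : ℕ}

lemma PDset_comp_swap_succ (hi : 1 ≤ i) (hji : j ≠ i) (hji1 : j ≠ i + 1) :
    PDset (x ∘ swap i (i + 1)) j = (PDset x j).map (swap i (i + 1)).toEmbedding := by
  ext k
  simp only [PDset, mem_map_equiv, symm_swap, mem_filter, mem_Ico, Function.comp_apply,
    swap_apply_of_ne_of_ne hji hji1, Order.one_le_iff_pos, swap_succ_lt_iff hji1,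
    lt_swap_succ_iff (a := i) (b := 0) (by omega)]

lemma RPDset_comp_swap_succ (him : i < m) (hji : j ≠ i) (hji1 : j ≠ i + 1) :
    RPDset m (x ∘ swap i (i + 1)) j = (RPDset m x j).map (swap i (i + 1)).toEmbedding := by
  ext k
  simp only [RPDset, mem_map_equiv, symm_swap, mem_filter, mem_Ioc, Function.comp_apply,
    swap_apply_of_ne_of_ne hji hji1, ← Nat.lt_succ_iff, lt_swap_succ_iff hji,
    swap_succ_lt_iff (a := i) (b := m + 1) (by omega)]

lemma PD_comp_swap_succ (hi : 1 ≤ i) (hji : j ≠ i) (hji1 : j ≠ i + 1)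
    (hPD : (PD x j : ℤ) ≠ j - i - 1) (hPD' : (PD x j : ℤ) ≠ j - i) :
    PD (x ∘ swap i (i + 1)) j = PD x j := by
  unfold PD at hPD hPD' ⊢
  rw [PDset_comp_swap_succ x hi hji hji1]
  by_cases hs : (PDset x j).Nonempty
  · have hlt : (PDset x j).max' hs < j := (mem_Ico.1 (mem_filter.1 (max'_mem _ hs)).1).2
    rw [dif_pos hs] at hPD hPD'
    rw [dif_pos hs.map, dif_pos hs, max'_map_swap_succ hs (by omega) (by omega)]
  · rw [dif_neg (by simpa using hs), dif_neg hs]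

lemma RPD_comp_swap_succ (him : i < m) (hji : j ≠ i) (hji1 : j ≠ i + 1)
    (hRPD : (RPD m x j : ℤ) ≠ i - j) (hRPD' : (RPD m x j : ℤ) ≠ i + 1 - j) :
    RPD m (x ∘ swap i (i + 1)) j = RPD m x j := by
  unfold RPD at hRPD hRPD' ⊢
  rw [RPDset_comp_swap_succ m x him hji hji1]
  by_cases hs : (RPDset m x j).Nonempty
  · have hlt : j < (RPDset m x j).min' hs := (mem_Ioc.1 (mem_filter.1 (min'_mem _ hs)).1).1
    rw [dif_pos hs] at hRPD hRPD'
    rw [dif_pos hs.map, dif_pos hs, min'_map_swap_succ hs (by omega) (by omega)]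
  · rw [dif_neg (by simpa using hs), dif_neg hs]

end DistanceTables

theorem stmt4_general (m i : ℕ) (x : ℕ → ℤ)
    (hi1 : 1 ≤ i) (him : i + 1 ≤ m) :
    ∀ j ∈ Finset.Icc 1 m, j ≠ i → j ≠ i + 1 →
      (((PD x j : ℤ) ≠ (j : ℤ) - i - 1 → (PD x j : ℤ) ≠ (j : ℤ) - i →
          PD (swapAt x i) j = PD x j) ∧
       ((RPD m x j : ℤ) ≠ (i : ℤ) - j → (RPD m x j : ℤ) ≠ (i : ℤ) + 1 - j →
          RPD m (swapAt x i) j = RPD m x j)) := by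
  intro j _ hji hji1
  rw [swapAt_eq_comp_swap]
  exact ⟨PD_comp_swap_succ x hi1 hji hji1, RPD_comp_swap_succ m x him hji hji1⟩

theorem stmt4 (m i : ℕ) (x : ℕ → ℤ) (hx : Set.InjOn x (Set.Icc 1 m))
    (hi1 : 1 ≤ i) (him : i + 1 ≤ m) :
    ∀ j ∈ Finset.Icc 1 m, j ≠ i → j ≠ i + 1 →
      (((PD x j : ℤ) ≠ (j : ℤ) - i - 1 → (PD x j : ℤ) ≠ (j : ℤ) - i →
          PD (swapAt x i) j = PD x j) ∧
       ((RPD m x j : ℤ) ≠ (i : ℤ) - j → (RPD m x j : ℤ) ≠ (i : ℤ) + 1 - j →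
          RPD m (swapAt x i) j = RPD m x j)) :=
  stmt4_general m i x hi1 him
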